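/- Let μ be a finite positive Borel measure on 𝕊^{n-1} with ∫⟨τ,ξ⟩⁺ dμ(ξ) ≥ φ > 0 for all τ ∈ 𝕊^{n-1}. Let E(q) = ⋂_{i=1}^m {x : ⟨x, ξ_i⟩ ≤ q_i} with q_i ≥ 0, where μ = Σ c_i δ_{ξ_i} is discrete with support {ξ_1,...,ξ_m} ⊂ 𝕊^{n-1}, and let h be the support function of E(q). If rτ ∈ E(q) for some r ≥ 0 and τ ∈ 𝕊^{n-1}, then φ r ≤ ∫_{𝕊^{n-1}} h(ξ) dμ(ξ) ≤ Σ_{i=1}^m c_i q_i. In particular E(q) ⊆ B̄(0, θ(q)/φ) where θ(q) = Σ c_i q_i. -/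
import Mathlib


open scoped RealInnerProductSpace

/-- For a discrete measure `μ = Σ cᵢ δ_{ξᵢ}` with `∫⟨τ,ξ⟩⁺ dμ ≥ φ > 0` for all unit `τ`,
and `E(q) = ⋂ᵢ {x : ⟨x, ξᵢ⟩ ≤ qᵢ}` with support function `h`: if `rτ ∈ E(q)` then
`φ r ≤ Σ cᵢ h(ξᵢ) ≤ Σ cᵢ qᵢ`; in particular `E(q) ⊆ B̄(0, (Σ cᵢ qᵢ)/φ)`. -/
theorem discrete_minkowski_apriori_bound (n m : ℕ) (hn : 2 ≤ n)
    (c : Fin m → ℝ) (hc : ∀ i, 0 < c i)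
    (ξ : Fin m → EuclideanSpace ℝ (Fin n)) (hξ : ∀ i, ‖ξ i‖ = 1)
    (q : Fin m → ℝ) (hq : ∀ i, 0 ≤ q i)
    (φ : ℝ) (hφ : 0 < φ)
    (hlb : ∀ τ : EuclideanSpace ℝ (Fin n), ‖τ‖ = 1 →
      φ ≤ ∑ i, c i * max ⟪τ, ξ i⟫ 0)
    (h : EuclideanSpace ℝ (Fin n) → ℝ)
    (hh : ∀ ζ : EuclideanSpace ℝ (Fin n),
      h ζ = sSup {r : ℝ | ∃ x ∈ ⋂ i, {y : EuclideanSpace ℝ (Fin n) | ⟪y, ξ i⟫ ≤ q i},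
        r = ⟪x, ζ⟫}) :
    (∀ r : ℝ, 0 ≤ r → ∀ τ : EuclideanSpace ℝ (Fin n), ‖τ‖ = 1 →
      r • τ ∈ ⋂ i, {y : EuclideanSpace ℝ (Fin n) | ⟪y, ξ i⟫ ≤ q i} →
      φ * r ≤ ∑ i, c i * h (ξ i)) ∧
    (∑ i, c i * h (ξ i)) ≤ (∑ i, c i * q i) ∧
    (⋂ i, {y : EuclideanSpace ℝ (Fin n) | ⟪y, ξ i⟫ ≤ q i}) ⊆
      Metric.closedBall 0 ((∑ i, c i * q i) / φ) := by
  set E := ⋂ i, {y : EuclideanSpace ℝ (Fin n) | ⟪y, ξ i⟫ ≤ q i} with hE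
  have h0E : (0 : EuclideanSpace ℝ (Fin n)) ∈ E := by
    simp only [hE, Set.mem_iInter, Set.mem_setOf_eq, inner_zero_left]
    intro i; exact hq i
  have hbdd : ∀ i, BddAbove {r : ℝ | ∃ x ∈ E, r = ⟪x, ξ i⟫} := by
    intro i
    refine ⟨q i, ?_⟩
    rintro r ⟨x, hx, rfl⟩
    exact Set.mem_iInter.mp hx i
  have h0mem : ∀ i, (0 : ℝ) ∈ {r : ℝ | ∃ x ∈ E, r = ⟪x, ξ i⟫} := by
    intro i; exact ⟨0, h0E, by simp⟩
  have hle : ∀ i, h (ξ i) ≤ q i := by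
    intro i
    rw [hh]
    refine csSup_le ⟨0, h0mem i⟩ ?_
    rintro r ⟨x, hx, rfl⟩
    exact Set.mem_iInter.mp hx i
  have hpos : ∀ i, 0 ≤ h (ξ i) := by
    intro i; rw [hh]; exact le_csSup (hbdd i) (h0mem i)
  have main : ∀ r : ℝ, 0 ≤ r → ∀ τ : EuclideanSpace ℝ (Fin n), ‖τ‖ = 1 →
      r • τ ∈ E → φ * r ≤ ∑ i, c i * h (ξ i) := by
    intro r hr τ hτ hmem
    have key : ∀ i, r * max ⟪τ, ξ i⟫ 0 ≤ h (ξ i) := by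
      intro i
      rcases le_or_gt ⟪τ, ξ i⟫ 0 with hneg | hposi
      · rw [max_eq_right hneg, mul_zero]; exact hpos i
      · rw [max_eq_left hposi.le]
        rw [hh]
        refine le_csSup (hbdd i) ⟨r • τ, hmem, ?_⟩
        rw [real_inner_smul_left]
    calc φ * r ≤ (∑ i, c i * max ⟪τ, ξ i⟫ 0) * r := by
          exact mul_le_mul_of_nonneg_right (hlb τ hτ) hr
      _ = ∑ i, c i * (r * max ⟪τ, ξ i⟫ 0) := by
          rw [Finset.sum_mul]; congr 1; ext i; ring
      _ ≤ ∑ i, c i * h (ξ i) := by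
          refine Finset.sum_le_sum fun i _ => ?_
          exact mul_le_mul_of_nonneg_left (key i) (hc i).le
  have mid : (∑ i, c i * h (ξ i)) ≤ ∑ i, c i * q i :=
    Finset.sum_le_sum fun i _ => mul_le_mul_of_nonneg_left (hle i) (hc i).le
  refine ⟨main, mid, ?_⟩
  intro x hx
  simp only [Metric.mem_closedBall, dist_zero_right]
  rcases eq_or_ne x 0 with rfl | hx0
  · simp only [norm_zero]
    have hs : 0 ≤ ∑ i, c i * q i :=
      Finset.sum_nonneg fun i _ => mul_nonneg (hc i).le (hq i)
    exact div_nonneg hs hφ.le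
  · have hnx : 0 < ‖x‖ := norm_pos_iff.mpr hx0
    have hτ : ‖(‖x‖⁻¹ • x : EuclideanSpace ℝ (Fin n))‖ = 1 := by
      rw [norm_smul]; simp [hnx.ne']
    have hxE : ‖x‖ • (‖x‖⁻¹ • x : EuclideanSpace ℝ (Fin n)) ∈ E := by
      rw [smul_smul, mul_inv_cancel₀ hnx.ne', one_smul]; exact hx
    have := main ‖x‖ (norm_nonneg x) _ hτ hxE
    have h2 : φ * ‖x‖ ≤ ∑ i, c i * q i := this.trans mid
    rw [le_div_iff₀ hφ]
    linarith
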